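/- In any pure Nash equilibrium θ† of a test-time compute game with perfectly rational users, the dominant provider (the one with the highest achievable value V*_1) has full market share: s_1(V_1(θ†_1); V_{−1}(θ†_{−1})) = 1, i.e., V_1(θ†_1) > V_j(θ†_j) for all j ≠ 1. -/

import Mathlib

open scoped Classical

/-- Utility of provider `i` in the test-time compute game with perfectly rational users:
the provider obtains full market share (share `1`) iff their offered value
`V_i(θ_i) = q_i(θ_i) − p_i(θ_i)` strictly exceeds the value offered by every other provider
and the abstention value `V₀`; the utility is the share times the profit
`p_i(θ_i) − c_i(θ_i)`. -/
noncomputable def perfectU (N : ℕ) (Θ : Type*) (p c q : Fin N → Θ → ℝ) (V₀ : ℝ)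
    (i : Fin N) (θv : Fin N → Θ) : ℝ :=
  (if (∀ j, j ≠ i → q j (θv j) - p j (θv j) < q i (θv i) - p i (θv i)) ∧
      V₀ < q i (θv i) - p i (θv i) then (1 : ℝ) else 0) * (p i (θv i) - c i (θv i))

/-!
If the dominant provider did not win at an equilibrium its utility would be `0`, while
switching to its value-maximising compute level `t*` beats every other provider's value
at every compute level, hence wins the market and earns the positive profit
`p(t*) − c(t*)`: a profitable deviation.
-/

section PerfectRationality

variable {N : ℕ} {Θ : Type*} {p c q : Fin N → Θ → ℝ} {V₀ : ℝ} {i : Fin N} {θv : Fin N → Θ}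

theorem perfectU_eq_profit
    (hwin : ∀ j, j ≠ i → q j (θv j) - p j (θv j) < q i (θv i) - p i (θv i))
    (hV₀ : V₀ < q i (θv i) - p i (θv i)) :
    perfectU N Θ p c q V₀ i θv = p i (θv i) - c i (θv i) := by
  rw [perfectU, if_pos ⟨hwin, hV₀⟩, one_mul]

theorem perfectU_eq_zero_of_le {j : Fin N} (hj : j ≠ i)
    (hle : q i (θv i) - p i (θv i) ≤ q j (θv j) - p j (θv j)) :
    perfectU N Θ p c q V₀ i θv = 0 := by
  rw [perfectU, if_neg (fun h => (h.1 j hj).not_ge hle), zero_mul]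

theorem forall_lt_of_no_profitable_deviation {t : Θ} (hprofit : 0 < p i t - c i t)
    (hwin : ∀ j, j ≠ i → q j (θv j) - p j (θv j) < q i t - p i t)
    (hV₀ : V₀ < q i t - p i t)
    (hNE : perfectU N Θ p c q V₀ i (Function.update θv i t) ≤ perfectU N Θ p c q V₀ i θv) :
    ∀ j, j ≠ i → q j (θv j) - p j (θv j) < q i (θv i) - p i (θv i) := by
  by_contra! hlose
  obtain ⟨j, hj, hle⟩ := hlose
  have hdeviate : perfectU N Θ p c q V₀ i (Function.update θv i t) = p i t - c i t := by
    refine (perfectU_eq_profit ?_ ?_).trans (by rw [Function.update_self])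
    · intro k hk
      simpa only [Function.update_self, Function.update_of_ne hk] using hwin k hk
    · simpa only [Function.update_self] using hV₀
  rw [hdeviate, perfectU_eq_zero_of_le hj hle] at hNE
  exact hNE.not_gt hprofit

end PerfectRationality

theorem exists_forall_lt_of_forall_exists_lt {ι Θ : Type*} [Finite Θ] [Nonempty Θ]
    {V : ι → Θ → ℝ} {i₀ : ι} (hdom : ∀ i, i ≠ i₀ → ∃ t₀, ∀ t, V i t < V i₀ t₀) :
    ∃ t₀, ∀ i, i ≠ i₀ → ∀ t, V i t < V i₀ t₀ := by
  obtain ⟨tmax, htmax⟩ := Finite.exists_max (V i₀)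
  refine ⟨tmax, fun i hi t => ?_⟩
  obtain ⟨t₀, ht₀⟩ := hdom i hi
  exact (ht₀ t).trans_le (htmax t₀)

/-- **The dominant provider captures the whole market at equilibrium.** In any pure Nash
equilibrium `θ†` of a test-time compute game with perfectly rational users, the dominant
provider (indexed `0`, having the strictly highest achievable value) offers a value strictly
higher than every other provider, i.e., has full market share. -/
theorem dominant_provider_full_share (N : ℕ) (Θ : Type*) [Fintype Θ]
    (p c q : Fin N → Θ → ℝ) (V₀ : ℝ)
    (hN : 2 ≤ N)
    (hprofit : ∀ (i : Fin N) (t : Θ), 0 < p i t - c i t)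
    (hV₀ : ∀ (i : Fin N) (t : Θ), V₀ < q i t - p i t)
    (hdom : ∀ i : Fin N, i ≠ ⟨0, by omega⟩ → ∃ t₀ : Θ, ∀ t : Θ,
      q i t - p i t < q (⟨0, by omega⟩ : Fin N) t₀ - p (⟨0, by omega⟩ : Fin N) t₀)
    (θd : Fin N → Θ)
    (hNE : ∀ (i : Fin N) (t' : Θ),
      perfectU N Θ p c q V₀ i (Function.update θd i t') ≤ perfectU N Θ p c q V₀ i θd) :
    ∀ j : Fin N, j ≠ ⟨0, by omega⟩ →
      q j (θd j) - p j (θd j) <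
        q (⟨0, by omega⟩ : Fin N) (θd ⟨0, by omega⟩) -
          p (⟨0, by omega⟩ : Fin N) (θd ⟨0, by omega⟩) := by
  have : Nonempty Θ := ⟨θd ⟨0, by omega⟩⟩
  obtain ⟨tbest, hbest⟩ :=
    exists_forall_lt_of_forall_exists_lt (V := fun i t => q i t - p i t) hdom
  exact forall_lt_of_no_profitable_deviation (hprofit _ tbest)
    (fun j hj => hbest j hj (θd j)) (hV₀ _ tbest) (hNE _ tbest)
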